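/- arXiv:2304.05809 — 2 statements merged into one kernel-verified Lean document; each statement's English description precedes it below -/
import Mathlib

section
/- Let ν be a Cannings offspring vector of size N. Then the functions Φ_j^{(N)} are monotone in the following sense: for all 1 ≤ ℓ ≤ j ≤ N and all k_1,…,k_j, m_1,…,m_ℓ ∈ ℕ with k_i ≥ m_i for 1 ≤ i ≤ ℓ and k_1+⋯+k_j ≤ N, one has Φ_j^{(N)}(k_1,…,k_j) ≤ Φ_ℓ^{(N)}(m_1,…,m_ℓ). -/
open MeasureTheory ProbabilityTheory Filter Finset

/-- A Cannings offspring vector of size `N`. -/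
def IsCannings {Ω : Type*} [MeasurableSpace Ω] (μ : Measure Ω) (N : ℕ)
    (ν : ℕ → Ω → ℕ) : Prop :=
  (∀ i, Measurable (ν i)) ∧
  (∀ᵐ ω ∂μ, ∑ i ∈ Finset.range N, ν i ω = N) ∧
  (∀ σ : Equiv.Perm (Fin N),
    Measure.map (fun ω (i : Fin N) => ν (σ i : ℕ) ω) μ =
      Measure.map (fun ω (i : Fin N) => ν (i : ℕ) ω) μ)

/-- `Φ_j^{(N)}(k_1,…,k_j) = ((N)_j/(N)_{k_1+⋯+k_j})·E((ν_1)_{k_1}⋯(ν_j)_{k_j})`. -/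
noncomputable def Phi {Ω : Type*} [MeasurableSpace Ω] (μ : Measure Ω)
    (ν : ℕ → Ω → ℕ) (N j : ℕ) (k : ℕ → ℕ) : ℝ :=
  ((N.descFactorial j : ℝ) / (N.descFactorial (∑ i ∈ Finset.range j, k i) : ℝ)) *
    ∫ ω, ∏ i ∈ Finset.range j, ((ν i ω).descFactorial (k i) : ℝ) ∂μ

/-!
Multiplying `(ν_1)_{k_1}⋯(ν_j)_{k_j}` by `N = ν_1 + ⋯ + ν_N` and taking expectations, the first
`j` summands are rewritten with `x (x)_k = (x)_{k+1} + k (x)_k`, and by exchangeability each of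
the other `N - j` summands keeps its expectation when `ν_r` is replaced by `ν_{j+1}`. After
normalising, this is the consistency relation, which writes `Φ_j(k)` as the sum of the
nonnegative terms `Φ_{j+1}(k, 1)` and `Φ_j(k + e_i)`, `i ≤ j`. So `Φ` decreases when one
argument is raised by one or when an argument `1` is appended; reducing `k_{ℓ+1}, …, k_j` to `1`
and dropping them, and then lowering `k_i` to `m_i`, gives the claim.
-/

namespace Nat

theorem cast_descFactorial_succ {R : Type*} [CommRing R] (n k : ℕ) :
    (n.descFactorial (k + 1) : R) = ((n : R) - k) * n.descFactorial k := by
  rcases le_or_gt k n with h | h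
  · rw [descFactorial_succ, cast_mul, cast_sub h]
  · simp [descFactorial_eq_zero_iff_lt.2 h]

end Nat

section Products

variable {ι : Type*} [DecidableEq ι]

theorem prod_descFactorial_mul {s : Finset ι} {a : ι} (ha : a ∈ s) (x k : ι → ℕ) :
    (∏ i ∈ s, ((x i).descFactorial (k i) : ℝ)) * x a =
      ∏ i ∈ s, ((x i).descFactorial (Function.update k a (k a + 1) i) : ℝ) +
        k a * ∏ i ∈ s, ((x i).descFactorial (k i) : ℝ) := by
  have hrest : ∏ i ∈ s.erase a, ((x i).descFactorial (Function.update k a (k a + 1) i) : ℝ) =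
      ∏ i ∈ s.erase a, ((x i).descFactorial (k i) : ℝ) :=
    prod_congr rfl fun i hi => by rw [Function.update_of_ne (ne_of_mem_erase hi)]
  rw [← mul_prod_erase _ _ ha, ← mul_prod_erase _ _ ha, hrest, Function.update_self,
    Nat.cast_descFactorial_succ]
  ring

theorem sum_update_succ {s : Finset ι} {a : ι} (ha : a ∈ s) (k : ι → ℕ) :
    ∑ i ∈ s, Function.update k a (k a + 1) i = ∑ i ∈ s, k i + 1 := by
  rw [sum_update_of_mem ha, sdiff_singleton_eq_erase, ← add_sum_erase _ _ ha]
  ring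

theorem prod_range_succ_update_one (j : ℕ) (x k : ℕ → ℕ) :
    ∏ i ∈ range (j + 1), ((x i).descFactorial (Function.update k j 1 i) : ℝ) =
      (∏ i ∈ range j, ((x i).descFactorial (k i) : ℝ)) * x j := by
  rw [prod_range_succ, Function.update_self, Nat.descFactorial_one]
  congr 1
  exact prod_congr rfl fun i hi => by rw [Function.update_of_ne (mem_range.1 hi).ne]

theorem sum_range_succ_update_one (j : ℕ) (k : ℕ → ℕ) :
    ∑ i ∈ range (j + 1), Function.update k j 1 i = ∑ i ∈ range j, k i + 1 := by
  rw [sum_range_succ, Function.update_self]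
  congr 1
  exact sum_congr rfl fun i hi => Function.update_of_ne (mem_range.1 hi).ne _ _

theorem le_sum_range_of_one_le {j : ℕ} {k : ℕ → ℕ} (hk : ∀ i < j, 1 ≤ k i) :
    j ≤ ∑ i ∈ range j, k i := by
  simpa using card_nsmul_le_sum (range j) k 1 fun i hi => hk i (mem_range.1 hi)

end Products

noncomputable def factorialMoment {Ω : Type*} [MeasurableSpace Ω] (μ : Measure Ω)
    (ν : ℕ → Ω → ℕ) (j : ℕ) (k : ℕ → ℕ) : ℝ :=
  ∫ ω, ∏ i ∈ range j, ((ν i ω).descFactorial (k i) : ℝ) ∂μ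

section Phi

variable {Ω : Type*} [MeasurableSpace Ω] {μ : Measure Ω} {N : ℕ} {ν : ℕ → Ω → ℕ}

theorem phi_eq (j : ℕ) (k : ℕ → ℕ) :
    Phi μ ν N j k = N.descFactorial j / N.descFactorial (∑ i ∈ range j, k i) *
      factorialMoment μ ν j k :=
  rfl

theorem phi_nonneg (j : ℕ) (k : ℕ → ℕ) :
    0 ≤ Phi μ ν N j k :=
  mul_nonneg (by positivity) (integral_nonneg fun _ => prod_nonneg fun _ _ => by positivity)

theorem phi_congr {j : ℕ} {k k' : ℕ → ℕ} (h : ∀ i < j, k i = k' i) :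
    Phi μ ν N j k = Phi μ ν N j k' := by
  have h' : ∀ i ∈ range j, k i = k' i := fun i hi => h i (mem_range.1 hi)
  simp only [Phi, sum_congr rfl h']
  congr 2 with ω
  exact prod_congr rfl fun i hi => by rw [h' i hi]

end Phi

namespace IsCannings

variable {Ω : Type*} [MeasurableSpace Ω] {μ : Measure Ω} {N : ℕ} {ν : ℕ → Ω → ℕ}

theorem ae_le (hC : IsCannings μ N ν) : ∀ᵐ ω ∂μ, ∀ i < N, ν i ω ≤ N := by
  filter_upwards [hC.2.1] with ω hω i hi
  exact hω ▸ single_le_sum (fun t _ => Nat.zero_le (ν t ω)) (mem_range.2 hi)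

theorem measurable_prod_descFactorial (hC : IsCannings μ N ν) (j : ℕ) (k : ℕ → ℕ) :
    Measurable fun ω => ∏ i ∈ range j, ((ν i ω).descFactorial (k i) : ℝ) :=
  Finset.measurable_prod _ fun i _ =>
    (measurable_of_countable fun n : ℕ => (n.descFactorial (k i) : ℝ)).comp (hC.1 i)

theorem integrable_prod_descFactorial [IsFiniteMeasure μ] (hC : IsCannings μ N ν) {j : ℕ}
    (hj : j ≤ N) (k : ℕ → ℕ) :
    Integrable (fun ω => ∏ i ∈ range j, ((ν i ω).descFactorial (k i) : ℝ)) μ := by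
  refine .of_bound (hC.measurable_prod_descFactorial j k).aestronglyMeasurable
    (∏ i ∈ range j, (N : ℝ) ^ k i) ?_
  filter_upwards [hC.ae_le] with ω hω
  rw [Real.norm_of_nonneg (by positivity)]
  refine prod_le_prod (fun i _ => by positivity) fun i hi => ?_
  exact_mod_cast (Nat.descFactorial_le_pow _ _).trans
    (Nat.pow_le_pow_left (hω i ((mem_range.1 hi).trans_le hj)) _)

theorem integral_prefix_eq_of_le (hC : IsCannings μ N ν) {j r : ℕ} (hjr : j ≤ r) (hr : r < N)
    (G : (Fin j → ℕ) → ℕ → ℝ) :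
    ∫ ω, G (fun i => ν i ω) (ν r ω) ∂μ = ∫ ω, G (fun i => ν i ω) (ν j ω) ∂μ := by
  have hj : j < N := hjr.trans_lt hr
  set σ := Equiv.swap (⟨j, hj⟩ : Fin N) ⟨r, hr⟩
  let F : (Fin N → ℕ) → ℝ := fun x => G (fun i => x (Fin.castLE hj.le i)) (x ⟨j, hj⟩)
  have hF : Measurable F := measurable_of_countable F
  have hX : ∀ τ : Equiv.Perm (Fin N), Measurable fun ω (i : Fin N) => ν (τ i) ω :=
    fun τ => measurable_pi_lambda _ fun i => hC.1 _
  have hσ : ∀ i : Fin j, σ (Fin.castLE hj.le i) = Fin.castLE hj.le i := fun i =>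
    Equiv.swap_apply_of_ne_of_ne (Fin.ne_of_lt i.2) (Fin.ne_of_lt (i.2.trans_le hjr))
  calc ∫ ω, G (fun i => ν i ω) (ν r ω) ∂μ = ∫ ω, F (fun i => ν (σ i) ω) ∂μ := by
        simp only [F, hσ, σ, Equiv.swap_apply_left, Fin.val_castLE]
    _ = ∫ x, F x ∂μ.map fun ω i => ν (σ i) ω :=
        (integral_map (hX σ).aemeasurable hF.aestronglyMeasurable).symm
    _ = ∫ x, F x ∂μ.map fun ω (i : Fin N) => ν i ω := by rw [hC.2.2 σ]
    _ = ∫ ω, G (fun i => ν i ω) (ν j ω) ∂μ :=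
        integral_map (hX 1).aemeasurable hF.aestronglyMeasurable

theorem factorialMoment_consistency [IsFiniteMeasure μ] (hC : IsCannings μ N ν) {j : ℕ}
    (hj : j < N) (k : ℕ → ℕ) :
    ((N : ℝ) - ∑ i ∈ range j, k i) * factorialMoment μ ν j k =
      ∑ i ∈ range j, factorialMoment μ ν j (Function.update k i (k i + 1)) +
        ((N : ℝ) - j) * factorialMoment μ ν (j + 1) (Function.update k j 1) := by
  set P := fun ω => ∏ i ∈ range j, ((ν i ω).descFactorial (k i) : ℝ)
  have hP : Integrable P μ := hC.integrable_prod_descFactorial hj.le k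
  have hPν : ∀ r ∈ range N, Integrable (fun ω => P ω * ν r ω) μ := fun r hr =>
    hP.mul_bdd (c := N) (measurable_of_countable _ |>.comp (hC.1 r)).aestronglyMeasurable <| by
      filter_upwards [hC.ae_le] with ω hω
      simpa using hω r (mem_range.1 hr)
  have htotal : (N : ℝ) * factorialMoment μ ν j k = ∑ r ∈ range N, ∫ ω, P ω * ν r ω ∂μ := by
    rw [← integral_finsetSum _ hPν, factorialMoment, ← integral_const_mul]
    refine integral_congr_ae ?_
    filter_upwards [hC.2.1] with ω hω
    rw [← mul_sum, ← Nat.cast_sum, hω, mul_comm]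
  have hhead : ∀ i ∈ range j, ∫ ω, P ω * ν i ω ∂μ =
      factorialMoment μ ν j (Function.update k i (k i + 1)) + k i * factorialMoment μ ν j k :=
    fun i hi => by
      rw [integral_congr_ae (ae_of_all _ fun ω => prod_descFactorial_mul hi (ν · ω) k),
        integral_add (hC.integrable_prod_descFactorial hj.le _) (hP.const_mul _),
        integral_const_mul]
      rfl
  have htail : ∀ r ∈ Ico j N, ∫ ω, P ω * ν r ω ∂μ =
      factorialMoment μ ν (j + 1) (Function.update k j 1) := fun r hr => by
    have hswap := hC.integral_prefix_eq_of_le (mem_Ico.1 hr).1 (mem_Ico.1 hr).2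
      fun x y => (∏ i : Fin j, ((x i).descFactorial (k i) : ℝ)) * y
    simp only [factorialMoment, prod_range_succ_update_one]
    simpa only [P, ← Fin.prod_univ_eq_prod_range] using hswap
  rw [← sum_range_add_sum_Ico _ hj.le, sum_congr rfl hhead, sum_congr rfl htail, sum_const,
    Nat.card_Ico, sum_add_distrib, ← sum_mul, nsmul_eq_mul, Nat.cast_sub hj.le,
    ← Nat.cast_sum] at htotal
  linarith

theorem phi_consistency [IsFiniteMeasure μ] (hC : IsCannings μ N ν) {j : ℕ}
    {k : ℕ → ℕ} (hj : j < N) (hK : ∑ i ∈ range j, k i < N) :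
    Phi μ ν N j k = Phi μ ν N (j + 1) (Function.update k j 1) +
      ∑ i ∈ range j, Phi μ ν N j (Function.update k i (k i + 1)) := by
  have hM := hC.factorialMoment_consistency hj k
  have hsum : ∀ i ∈ range j, Phi μ ν N j (Function.update k i (k i + 1)) =
      N.descFactorial j / N.descFactorial (∑ i ∈ range j, k i + 1) *
        factorialMoment μ ν j (Function.update k i (k i + 1)) := fun i hi => by
    rw [phi_eq, sum_update_succ hi]
  have hD : (N.descFactorial (∑ i ∈ range j, k i) : ℝ) ≠ 0 := by
    exact_mod_cast (Nat.descFactorial_pos.2 hK.le).ne'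
  have hNK : (N : ℝ) - ∑ i ∈ range j, k i ≠ 0 := by
    rw [sub_ne_zero]; exact_mod_cast hK.ne'
  rw [sum_congr rfl hsum, ← mul_sum, phi_eq, phi_eq, sum_range_succ_update_one,
    Nat.cast_descFactorial_succ, Nat.cast_descFactorial_succ]
  field_simp
  linear_combination (N.descFactorial j : ℝ) * hM

theorem phi_update_succ_le [IsFiniteMeasure μ] (hC : IsCannings μ N ν) {j a : ℕ} {k : ℕ → ℕ}
    (hj : j < N) (hK : ∑ i ∈ range j, k i < N) (ha : a < j) :
    Phi μ ν N j (Function.update k a (k a + 1)) ≤ Phi μ ν N j k := by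
  rw [hC.phi_consistency hj hK]
  exact le_add_of_nonneg_of_le (phi_nonneg _ _)
    (single_le_sum (f := fun i => Phi μ ν N j (Function.update k i (k i + 1)))
      (fun i _ => phi_nonneg _ _) (mem_range.2 ha))

theorem phi_succ_update_one_le [IsFiniteMeasure μ] (hC : IsCannings μ N ν) {j : ℕ}
    {k : ℕ → ℕ} (hj : j < N) (hK : ∑ i ∈ range j, k i < N) :
    Phi μ ν N (j + 1) (Function.update k j 1) ≤ Phi μ ν N j k := by
  rw [hC.phi_consistency hj hK]
  exact le_add_of_nonneg_right (sum_nonneg fun i _ => phi_nonneg _ _)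

theorem phi_le_of_le_args [IsFiniteMeasure μ] (hC : IsCannings μ N ν) {j : ℕ} {k m : ℕ → ℕ}
    (hm : ∀ i < j, 1 ≤ m i) (hmk : ∀ i < j, m i ≤ k i) (hK : ∑ i ∈ range j, k i ≤ N) :
    Phi μ ν N j k ≤ Phi μ ν N j m := by
  obtain ⟨n, hn⟩ := Nat.exists_eq_add_of_le (sum_le_sum fun i hi => hmk i (mem_range.1 hi))
  induction n generalizing m with
  | zero =>
    have heq := (sum_eq_sum_iff_of_le fun i hi => hmk i (mem_range.1 hi)).1 hn.symm
    exact (phi_congr fun i hi => (heq i (mem_range.2 hi)).symm).le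
  | succ n ih =>
    obtain ⟨a, ha, hlt⟩ := exists_lt_of_sum_lt (show ∑ i ∈ range j, m i < ∑ i ∈ range j, k i by
      omega)
    have hjm := le_sum_range_of_one_le hm
    refine (ih (m := Function.update m a (m a + 1)) (fun i hi => ?_) (fun i hi => ?_) ?_).trans
      (hC.phi_update_succ_le (by omega) (by omega) (mem_range.1 ha))
    · grind [Function.update_apply]
    · grind [Function.update_apply]
    · rw [sum_update_succ ha]; omega

theorem phi_le_of_le_length [IsFiniteMeasure μ] (hC : IsCannings μ N ν) {l j : ℕ}
    {k : ℕ → ℕ} (hlj : l ≤ j) (hk : ∀ i < j, 1 ≤ k i) (hK : ∑ i ∈ range j, k i ≤ N) :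
    Phi μ ν N j k ≤ Phi μ ν N l k := by
  induction j, hlj using Nat.le_induction with
  | base => exact le_rfl
  | succ j _ ih =>
    have hkj : 1 ≤ k j := hk j (lt_add_one j)
    have hjK := le_sum_range_of_one_le fun i (hi : i < j) => hk i (by omega)
    rw [sum_range_succ] at hK
    calc Phi μ ν N (j + 1) k ≤ Phi μ ν N (j + 1) (Function.update k j 1) := by
          refine hC.phi_le_of_le_args (fun i _ => ?_) (fun i hi => ?_) (by rwa [sum_range_succ])
          · grind [Function.update_apply]
          · grind [Function.update_apply]
      _ ≤ Phi μ ν N j k := hC.phi_succ_update_one_le (by omega) (by omega)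
      _ ≤ Phi μ ν N l k := ih (fun i hi => hk i (by omega)) (by omega)

end IsCannings

theorem cannings_Phi_monotone_general
    {Ω : Type*} [MeasurableSpace Ω] (μ : Measure Ω) [IsProbabilityMeasure μ]
    (N : ℕ) (ν : ℕ → Ω → ℕ) (hC : IsCannings μ N ν)
    (l j : ℕ) (hlj : l ≤ j)
    (k m : ℕ → ℕ) (hk : ∀ i < j, 1 ≤ k i) (hm : ∀ i < l, 1 ≤ m i)
    (hkm : ∀ i < l, m i ≤ k i) (hsum : ∑ i ∈ Finset.range j, k i ≤ N) :
    Phi μ ν N j k ≤ Phi μ ν N l m :=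
  calc Phi μ ν N j k ≤ Phi μ ν N l k := hC.phi_le_of_le_length hlj hk hsum
    _ ≤ Phi μ ν N l m := hC.phi_le_of_le_args hm hkm <|
        (sum_le_sum_of_subset (range_subset_range.2 hlj)).trans hsum

/-- Monotonicity of the transition functions `Φ_j^{(N)}` of a Cannings model:
for `1 ≤ ℓ ≤ j ≤ N` and `k_i ≥ m_i` (`i ≤ ℓ`) with `k_1+⋯+k_j ≤ N`,
`Φ_j^{(N)}(k_1,…,k_j) ≤ Φ_ℓ^{(N)}(m_1,…,m_ℓ)`. -/
theorem cannings_Phi_monotone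
    {Ω : Type*} [MeasurableSpace Ω] (μ : Measure Ω) [IsProbabilityMeasure μ]
    (N : ℕ) (ν : ℕ → Ω → ℕ) (hC : IsCannings μ N ν)
    (l j : ℕ) (hl : 1 ≤ l) (hlj : l ≤ j) (hjN : j ≤ N)
    (k m : ℕ → ℕ) (hk : ∀ i < j, 1 ≤ k i) (hm : ∀ i < l, 1 ≤ m i)
    (hkm : ∀ i < l, m i ≤ k i) (hsum : ∑ i ∈ Finset.range j, k i ≤ N) :
    Phi μ ν N j k ≤ Phi μ ν N l m :=
  cannings_Phi_monotone_general μ N ν hC l j hlj k m hk hm hkm hsum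
end

section
/- Let c ∈ ℕ, let ξ have the binomial distribution with parameters c and 1/c, let L ∈ ℕ, and let u_1,…,u_L,u_K ≥ 0 with u_1+⋯+u_L+u_K = 1. Let Y = (Y_1,…,Y_L) be a random vector with probability mass function p(j) := E((ξ)_{|j|}·u_K^{ξ−|j|})·∏_{ℓ=1}^L u_ℓ^{j_ℓ}/j_ℓ! for j ∈ ℕ₀^L. Then for all m = (m_1,…,m_L) ∈ ℕ₀^L, E(∏_{ℓ=1}^L (Y_ℓ)_{m_ℓ}) = (c)_{|m|}·(1/c)^{|m|}·∏_{ℓ=1}^L u_ℓ^{m_ℓ}, where |m| := m_1+⋯+m_L; in particular, for ℓ_1 ≠ ℓ_2, Cov(Y_{ℓ_1}, Y_{ℓ_2}) = −u_{ℓ_1}·u_{ℓ_2}/c ≤ 0. -/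
/-! The binomial identity `E[(ξ)_n t^(ξ-n)] = (c)_n p^n (p t + 1 - p)^(c-n)` turns the pmf into
`p(j) = F(|j|) ∏ u^j / j!` with `F n = (c)_n p^n R^(c-n)`, `R = p u_K + 1 - p`. Multiplying by
`∏ (j)_m` and shifting `j = m + i` pulls out `u^m`; grouping the `i` by `|i| = k`, the multinomial
theorem leaves `∑_k F(|m| + k) (∑ u)^k / k!`, which the binomial theorem collapses to
`(c)_|m| p^|m|` because `p ∑ u + R = 1`. The covariance is the moment at `m = e_a + e_b` minus
the product of those at `e_a` and `e_b`. -/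

open MeasureTheory Finset Nat

theorem Nat.descFactorial_add_eq_mul_factorial_mul_choose (c n i : ℕ) :
    c.descFactorial (n + i) = c.descFactorial n * (i ! * (c - n).choose i) := by
  rw [← Nat.descFactorial_eq_factorial_mul_choose, mul_comm,
    ← Nat.descFactorial_mul_descFactorial (Nat.le_add_right n i), Nat.add_sub_cancel_left]

theorem Nat.add_descFactorial_mul_choose_mul_factorial (c n i : ℕ) :
    (n + i).descFactorial n * c.choose (n + i) * i ! = c.descFactorial (n + i) := by
  have h := Nat.factorial_mul_descFactorial (Nat.le_add_right n i)
  rw [Nat.add_sub_cancel_left] at h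
  rw [Nat.descFactorial_eq_factorial_mul_choose c, ← h]
  ring

theorem sum_descFactorial_add_div_factorial_mul_pow (c n : ℕ) (x y : ℝ) :
    ∑ i ∈ range (c - n + 1), (c.descFactorial (n + i) : ℝ) / i ! * x ^ i * y ^ (c - (n + i)) =
      c.descFactorial n * (x + y) ^ (c - n) := by
  rw [add_pow, mul_sum]
  refine sum_congr rfl fun i _ => ?_
  rw [Nat.descFactorial_add_eq_mul_factorial_mul_choose, ← Nat.sub_sub]
  push_cast
  field_simp

theorem integral_comp_eq_sum_of_mul_measure_eq_zero {Ω α : Type*} [MeasurableSpace Ω]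
    [MeasurableSpace α] [MeasurableSingletonClass α] [Countable α] (μ : Measure Ω)
    [IsFiniteMeasure μ] {X : Ω → α} (hX : Measurable X) (g : α → ℝ) (s : Finset α)
    (hs : ∀ a ∉ s, g a * (μ {ω | X ω = a}).toReal = 0) :
    ∫ ω, g (X ω) ∂μ = ∑ a ∈ s, g a * (μ {ω | X ω = a}).toReal := by
  have hmap : ∀ a, (μ.map X).real {a} = (μ {ω | X ω = a}).toReal := fun a => by
    rw [measureReal_def, Measure.map_apply hX (measurableSet_singleton a)]
    rfl
  have hae : g =ᵐ[μ.map X] (s : Set α).indicator g := by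
    refine ae_iff_of_countable.2 fun a ha => ?_
    by_cases has : a ∈ s
    · simp [has]
    · have hne : (μ {ω | X ω = a}).toReal ≠ 0 := by
        rw [← hmap, measureReal_def, ENNReal.toReal_ne_zero]
        exact ⟨ha, measure_ne_top _ _⟩
      simpa [has, hne] using hs a has
  have hint : IntegrableOn g s (μ.map X) := by
    rw [← Set.biUnion_of_singleton (s : Set α), integrableOn_finite_biUnion s.finite_toSet]
    exact fun a _ => integrableOn_singleton
  calc ∫ ω, g (X ω) ∂μ = ∫ a, g a ∂μ.map X :=
        (integral_map hX.aemeasurable (measurable_of_countable g).aestronglyMeasurable).symm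
    _ = ∫ a in s, g a ∂μ.map X := by rw [integral_congr_ae hae, integral_indicator s.measurableSet]
    _ = ∑ a ∈ s, g a * (μ {ω | X ω = a}).toReal := by
        rw [setIntegral_finset s hint]
        simp only [hmap, smul_eq_mul, mul_comm]

theorem integral_descFactorial_mul_pow_of_binomial {Ω : Type*} [MeasurableSpace Ω]
    (μ : Measure Ω) [IsFiniteMeasure μ] {ξ : Ω → ℕ} (hξ : Measurable ξ) (c : ℕ) (p : ℝ)
    (hbin : ∀ k, (μ {ω | ξ ω = k}).toReal = c.choose k * p ^ k * (1 - p) ^ (c - k))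
    (n : ℕ) (t : ℝ) :
    ∫ ω, ((ξ ω).descFactorial n : ℝ) * t ^ (ξ ω - n) ∂μ =
      c.descFactorial n * p ^ n * (p * t + (1 - p)) ^ (c - n) := by
  have hs : ∀ k ∉ (range (c - n + 1)).map (addLeftEmbedding n),
      (k.descFactorial n : ℝ) * t ^ (k - n) * (μ {ω | ξ ω = k}).toReal = 0 := by
    intro k hk
    obtain hkn | hnk := lt_or_ge k n
    · simp [Nat.descFactorial_eq_zero_iff_lt.2 hkn]
    · have hck : c < k := by
        contrapose! hk
        exact mem_map.2 ⟨k - n, mem_range.2 (by omega), by simp; omega⟩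
      simp [hbin, Nat.choose_eq_zero_of_lt hck]
  rw [integral_comp_eq_sum_of_mul_measure_eq_zero μ hξ _ _ hs, sum_map, mul_right_comm,
    ← sum_descFactorial_add_div_factorial_mul_pow, sum_mul]
  refine sum_congr rfl fun i _ => ?_
  have h := congrArg (Nat.cast (R := ℝ)) (Nat.add_descFactorial_mul_choose_mul_factorial c n i)
  push_cast at h
  rw [← h, hbin]
  simp only [addLeftEmbedding_apply, Nat.add_sub_cancel_left, pow_add, mul_pow]
  field_simp

theorem sum_piAntidiag_prod_pow_div_factorial {ι : Type*} [Fintype ι] [DecidableEq ι]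
    (u : ι → ℝ) (n : ℕ) :
    ∑ k ∈ piAntidiag univ n, ∏ ℓ, u ℓ ^ k ℓ / (k ℓ)! = (∑ ℓ, u ℓ) ^ n / n ! := by
  rw [eq_div_iff (by positivity), sum_mul, sum_pow_eq_sum_piAntidiag]
  refine sum_congr rfl fun k hk => ?_
  have h := congrArg (Nat.cast (R := ℝ)) (Nat.multinomial_spec univ k)
  rw [(mem_piAntidiag.1 hk).1] at h
  push_cast at h
  rw [prod_div_distrib, ← h]
  have : (∏ ℓ, ((k ℓ)! : ℝ)) ≠ 0 := by positivity
  field_simp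

theorem add_descFactorial_mul_pow_div_factorial (a b : ℕ) (x : ℝ) :
    ((a + b).descFactorial a : ℝ) * (x ^ (a + b) / (a + b)!) = x ^ a * (x ^ b / b !) := by
  have h := congrArg (Nat.cast (R := ℝ)) (Nat.factorial_mul_descFactorial (Nat.le_add_right a b))
  rw [Nat.add_sub_cancel_left] at h
  push_cast at h
  rw [← h, pow_add]
  field_simp

theorem integral_prod_descFactorial_of_pmf {Ω ι : Type*} [MeasurableSpace Ω] (μ : Measure Ω)
    [IsFiniteMeasure μ] [Fintype ι] [DecidableEq ι] {Y : Ω → ι → ℕ} (hY : Measurable Y)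
    (u : ι → ℝ) (F : ℕ → ℝ) (c : ℕ) (hF : ∀ n, c < n → F n = 0)
    (hpmf : ∀ j, (μ {ω | Y ω = j}).toReal = F (∑ ℓ, j ℓ) * ∏ ℓ, u ℓ ^ j ℓ / (j ℓ)!)
    (m : ι → ℕ) :
    ∫ ω, ∏ ℓ, ((Y ω ℓ).descFactorial (m ℓ) : ℝ) ∂μ =
      (∏ ℓ, u ℓ ^ m ℓ) * ∑ k ∈ range (c - ∑ ℓ, m ℓ + 1),
        F (∑ ℓ, m ℓ + k) * ((∑ ℓ, u ℓ) ^ k / k !) := by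
  set M := ∑ ℓ, m ℓ
  set T := (range (c - M + 1)).biUnion (piAntidiag (univ : Finset ι))
  have hT : ∀ i, i ∈ T ↔ ∑ ℓ, i ℓ ≤ c - M := fun i => by simp [T]
  have hs : ∀ j ∉ T.map (addLeftEmbedding m),
      (∏ ℓ, ((j ℓ).descFactorial (m ℓ) : ℝ)) * (μ {ω | Y ω = j}).toReal = 0 := by
    intro j hj
    by_cases hmj : m ≤ j
    · have hj' : j - m ∉ T := fun h => hj (mem_map.2 ⟨j - m, h, add_tsub_cancel_of_le hmj⟩)
      have hsum : ∑ ℓ, j ℓ = M + ∑ ℓ, (j - m) ℓ := by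
        rw [← sum_add_distrib]
        exact sum_congr rfl fun ℓ _ => (Nat.add_sub_of_le (hmj ℓ)).symm
      rw [hT, not_le] at hj'
      rw [hpmf, hF _ (by omega)]
      simp
    · obtain ⟨ℓ, hℓ⟩ : ∃ ℓ, j ℓ < m ℓ := by simpa [Pi.le_def] using hmj
      rw [prod_eq_zero (mem_univ ℓ) (by simp [Nat.descFactorial_eq_zero_iff_lt.2 hℓ]), zero_mul]
  rw [integral_comp_eq_sum_of_mul_measure_eq_zero μ hY _ _ hs, sum_map, sum_biUnion, mul_sum]
  · refine sum_congr rfl fun k _ => ?_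
    rw [← sum_piAntidiag_prod_pow_div_factorial, mul_sum, mul_sum]
    refine sum_congr rfl fun i hi => ?_
    have hsum : ∑ ℓ, (m + i) ℓ = M + k := by
      simp only [Pi.add_apply, sum_add_distrib, (mem_piAntidiag.1 hi).1, M]
    rw [addLeftEmbedding_apply, hpmf, hsum, mul_left_comm, ← prod_mul_distrib]
    simp only [Pi.add_apply, add_descFactorial_mul_pow_div_factorial, prod_mul_distrib]
    ring
  · exact fun a _ b _ hab => disjoint_left.2 fun i ha hb =>
      hab ((mem_piAntidiag.1 ha).1.symm.trans (mem_piAntidiag.1 hb).1)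

theorem integral_prod_descFactorial_of_binomial_mixture {Ω Ω' ι : Type*} [MeasurableSpace Ω]
    [MeasurableSpace Ω'] (μ : Measure Ω) [IsFiniteMeasure μ] (μ' : Measure Ω')
    [IsFiniteMeasure μ'] [Fintype ι] [DecidableEq ι] {ξ : Ω → ℕ} (hξ : Measurable ξ)
    (c : ℕ) (p : ℝ)
    (hbin : ∀ k, (μ {ω | ξ ω = k}).toReal = c.choose k * p ^ k * (1 - p) ^ (c - k))
    (u : ι → ℝ) (uK : ℝ) (husum : (∑ ℓ, u ℓ) + uK = 1) {Y : Ω' → ι → ℕ} (hY : Measurable Y)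
    (hpmf : ∀ j : ι → ℕ, (μ' {ω' | Y ω' = j}).toReal =
      (∫ ω, ((ξ ω).descFactorial (∑ ℓ, j ℓ) : ℝ) * uK ^ (ξ ω - ∑ ℓ, j ℓ) ∂μ) *
        ∏ ℓ, u ℓ ^ j ℓ / (j ℓ)!)
    (m : ι → ℕ) :
    ∫ ω', ∏ ℓ, ((Y ω' ℓ).descFactorial (m ℓ) : ℝ) ∂μ' =
      c.descFactorial (∑ ℓ, m ℓ) * p ^ (∑ ℓ, m ℓ) * ∏ ℓ, u ℓ ^ m ℓ := by
  rw [integral_prod_descFactorial_of_pmf μ' hY u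
    (fun n => c.descFactorial n * p ^ n * (p * uK + (1 - p)) ^ (c - n)) c
    (fun n hn => by simp [Nat.descFactorial_eq_zero_iff_lt.2 hn])
    (fun j => by rw [hpmf, integral_descFactorial_mul_pow_of_binomial μ hξ c p hbin])]
  have hsum := sum_descFactorial_add_div_factorial_mul_pow c (∑ ℓ, m ℓ) (p * ∑ ℓ, u ℓ)
    (p * uK + (1 - p))
  rw [show p * ∑ ℓ, u ℓ + (p * uK + (1 - p)) = 1 by linear_combination p * husum, one_pow,
    mul_one] at hsum
  rw [← hsum, mul_sum (range _), sum_mul (range _), sum_mul (range _)]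
  refine sum_congr rfl fun k _ => ?_
  rw [pow_add, mul_pow]
  ring

theorem prod_apply_pi_single_one {ι M : Type*} [Fintype ι] [DecidableEq ι] [CommMonoid M]
    (f : ι → ℕ → M) (hf : ∀ i, f i 0 = 1) (a : ι) :
    ∏ i, f i ((Pi.single a 1 : ι → ℕ) i) = f a 1 :=
  (Fintype.prod_eq_single a fun i hi => by simp [hi, hf]).trans (by simp)

theorem prod_apply_pi_single_one_add_pi_single_one {ι M : Type*} [Fintype ι] [DecidableEq ι]
    [CommMonoid M] (f : ι → ℕ → M) (hf : ∀ i, f i 0 = 1) {a b : ι} (hab : a ≠ b) :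
    ∏ i, f i ((Pi.single a 1 + Pi.single b 1 : ι → ℕ) i) = f a 1 * f b 1 := by
  rw [Fintype.prod_eq_mul a b hab fun i hi => by simp [hi.1, hi.2, hf]]
  simp [hab, hab.symm]

theorem covariance_eq_of_descFactorial_moments {Ω ι : Type*} [MeasurableSpace Ω]
    (μ : Measure Ω) [Fintype ι] [DecidableEq ι] (Y : Ω → ι → ℕ) (c : ℕ) (p : ℝ) (u : ι → ℝ)
    (hmom : ∀ m : ι → ℕ, ∫ ω, ∏ ℓ, ((Y ω ℓ).descFactorial (m ℓ) : ℝ) ∂μ =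
      c.descFactorial (∑ ℓ, m ℓ) * p ^ (∑ ℓ, m ℓ) * ∏ ℓ, u ℓ ^ m ℓ) {a b : ι} (hab : a ≠ b) :
    (∫ ω, (Y ω a : ℝ) * (Y ω b : ℝ) ∂μ) - (∫ ω, (Y ω a : ℝ) ∂μ) * (∫ ω, (Y ω b : ℝ) ∂μ) =
      -(c * p ^ 2 * (u a * u b)) := by
  have hmean : ∀ i, ∫ ω, (Y ω i : ℝ) ∂μ = c * p * u i := fun i => by
    have hY : (fun ω => ∏ ℓ, ((Y ω ℓ).descFactorial ((Pi.single i 1 : ι → ℕ) ℓ) : ℝ)) =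
        fun ω => (Y ω i : ℝ) := funext fun ω => by
      rw [prod_apply_pi_single_one (fun ℓ k => ((Y ω ℓ).descFactorial k : ℝ)) (by simp)]
      simp
    have h := hmom (Pi.single i 1)
    rw [hY, prod_apply_pi_single_one (fun ℓ k => u ℓ ^ k) (by simp)] at h
    simpa using h
  have hsecond : ∫ ω, (Y ω a : ℝ) * (Y ω b : ℝ) ∂μ = c.descFactorial 2 * p ^ 2 * (u a * u b) := by
    have hY : (fun ω => ∏ ℓ, ((Y ω ℓ).descFactorial
        ((Pi.single a 1 + Pi.single b 1 : ι → ℕ) ℓ) : ℝ)) = fun ω => (Y ω a : ℝ) * Y ω b :=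
      funext fun ω => by
        rw [prod_apply_pi_single_one_add_pi_single_one
          (fun ℓ k => ((Y ω ℓ).descFactorial k : ℝ)) (by simp) hab]
        simp
    have h := hmom (Pi.single a 1 + Pi.single b 1)
    rw [hY, prod_apply_pi_single_one_add_pi_single_one (fun ℓ k => u ℓ ^ k) (by simp) hab] at h
    simpa [sum_add_distrib] using h
  rw [hmean, hmean, hsecond]
  rcases c with _ | c
  · simp
  · simp [Nat.descFactorial_succ]
    ring

theorem kimura_branching_offspring_moments_general
    {Ω : Type*} [MeasurableSpace Ω] (μ : Measure Ω) [IsProbabilityMeasure μ]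
    {Ω' : Type*} [MeasurableSpace Ω'] (μ' : Measure Ω') [IsProbabilityMeasure μ']
    (c : ℕ)
    (ξ : Ω → ℕ) (hξ : Measurable ξ)
    (hbin : ∀ m : ℕ, (μ {ω | ξ ω = m}).toReal =
      (c.choose m : ℝ) * (1 / (c : ℝ)) ^ m * (1 - 1 / (c : ℝ)) ^ (c - m))
    (L : ℕ)
    (u : Fin L → ℝ) (uK : ℝ) (hu : ∀ ℓ, 0 ≤ u ℓ)
    (husum : (∑ ℓ, u ℓ) + uK = 1)
    (Y : Ω' → Fin L → ℕ) (hY : Measurable Y)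
    (hpmf : ∀ j : Fin L → ℕ, (μ' {ω' | Y ω' = j}).toReal =
      (∫ ω, ((ξ ω).descFactorial (∑ ℓ, j ℓ) : ℝ) * uK ^ (ξ ω - ∑ ℓ, j ℓ) ∂μ) *
        ∏ ℓ, u ℓ ^ j ℓ / ((j ℓ)! : ℝ)) :
    (∀ m : Fin L → ℕ,
      ∫ ω', ∏ ℓ, ((Y ω' ℓ).descFactorial (m ℓ) : ℝ) ∂μ' =
        (c.descFactorial (∑ ℓ, m ℓ) : ℝ) * (1 / (c : ℝ)) ^ (∑ ℓ, m ℓ) *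
          ∏ ℓ, u ℓ ^ m ℓ) ∧
    (∀ ℓ₁ ℓ₂ : Fin L, ℓ₁ ≠ ℓ₂ →
      (∫ ω', (Y ω' ℓ₁ : ℝ) * (Y ω' ℓ₂ : ℝ) ∂μ') -
          (∫ ω', (Y ω' ℓ₁ : ℝ) ∂μ') * (∫ ω', (Y ω' ℓ₂ : ℝ) ∂μ') =
        -(u ℓ₁ * u ℓ₂) / (c : ℝ) ∧
      -(u ℓ₁ * u ℓ₂) / (c : ℝ) ≤ 0) := by
  have hmom := integral_prod_descFactorial_of_binomial_mixture μ μ' hξ c (1 / c) hbin u uK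
    husum hY hpmf
  refine ⟨hmom, fun a b hab => ⟨?_, ?_⟩⟩
  · rw [covariance_eq_of_descFactorial_moments μ' Y c _ u hmom hab]
    rcases eq_or_ne (c : ℝ) 0 with hc | hc
    · simp [hc]
    · field_simp
  · exact div_nonpos_of_nonpos_of_nonneg (neg_nonpos.2 (mul_nonneg (hu a) (hu b))) c.cast_nonneg

/-- For the multi-type Kimura model: if `ξ ~ Bin(c, 1/c)` and `Y` has the pmf
`p(j) = E((ξ)_{|j|}·u_K^{ξ-|j|})·∏_ℓ u_ℓ^{j_ℓ}/j_ℓ!`, then the joint descending factorial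
moments are `E(∏_ℓ (Y_ℓ)_{m_ℓ}) = (c)_{|m|}·(1/c)^{|m|}·∏_ℓ u_ℓ^{m_ℓ}`; in particular,
for `ℓ₁ ≠ ℓ₂`, `Cov(Y_{ℓ₁},Y_{ℓ₂}) = -u_{ℓ₁}u_{ℓ₂}/c ≤ 0`. -/
theorem kimura_branching_offspring_moments
    {Ω : Type*} [MeasurableSpace Ω] (μ : Measure Ω) [IsProbabilityMeasure μ]
    {Ω' : Type*} [MeasurableSpace Ω'] (μ' : Measure Ω') [IsProbabilityMeasure μ']
    (c : ℕ) (hc : 1 ≤ c)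
    (ξ : Ω → ℕ) (hξ : Measurable ξ)
    (hbin : ∀ m : ℕ, (μ {ω | ξ ω = m}).toReal =
      (c.choose m : ℝ) * (1 / (c : ℝ)) ^ m * (1 - 1 / (c : ℝ)) ^ (c - m))
    (L : ℕ) (hL : 1 ≤ L)
    (u : Fin L → ℝ) (uK : ℝ) (hu : ∀ ℓ, 0 ≤ u ℓ) (huK : 0 ≤ uK)
    (husum : (∑ ℓ, u ℓ) + uK = 1)
    (Y : Ω' → Fin L → ℕ) (hY : Measurable Y)
    (hpmf : ∀ j : Fin L → ℕ, (μ' {ω' | Y ω' = j}).toReal =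
      (∫ ω, ((ξ ω).descFactorial (∑ ℓ, j ℓ) : ℝ) * uK ^ (ξ ω - ∑ ℓ, j ℓ) ∂μ) *
        ∏ ℓ, u ℓ ^ j ℓ / ((j ℓ)! : ℝ)) :
    (∀ m : Fin L → ℕ,
      ∫ ω', ∏ ℓ, ((Y ω' ℓ).descFactorial (m ℓ) : ℝ) ∂μ' =
        (c.descFactorial (∑ ℓ, m ℓ) : ℝ) * (1 / (c : ℝ)) ^ (∑ ℓ, m ℓ) *
          ∏ ℓ, u ℓ ^ m ℓ) ∧
    (∀ ℓ₁ ℓ₂ : Fin L, ℓ₁ ≠ ℓ₂ →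
      (∫ ω', (Y ω' ℓ₁ : ℝ) * (Y ω' ℓ₂ : ℝ) ∂μ') -
          (∫ ω', (Y ω' ℓ₁ : ℝ) ∂μ') * (∫ ω', (Y ω' ℓ₂ : ℝ) ∂μ') =
        -(u ℓ₁ * u ℓ₂) / (c : ℝ) ∧
      -(u ℓ₁ * u ℓ₂) / (c : ℝ) ≤ 0) :=
  kimura_branching_offspring_moments_general μ μ' c ξ hξ hbin L u uK hu husum Y hY hpmf
end
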